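/- Two processes s and t are not testing equivalent if and only if there exists a test T without probabilistic transitions such that Res(s,T) ≠ Res(t,T); i.e., probabilistic transitions add no distinguishing power to tests. -/

import Mathlib

inductive Proc (A : Type) where
  | nd : List (A × Proc A) → Proc A
  | pr : List (ℝ × Proc A) → Proc A

namespace Proc

variable {A : Type} [DecidableEq A]

/-- The menu of a nondeterministic state: the set of initially enabled actions. -/
def menu : Proc A → Finset A
  | nd l => (l.map Prod.fst).toFinset
  | pr _ => ∅

/-- Deterministic action transition. -/
def step : Proc A → A → Option (Proc A)
  | nd l, a => (l.find? (fun x => x.1 = a)).map Prod.snd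
  | pr _, _ => none

/-- P¹ₛ(M) : the probability that the initial menu observed is M. -/
noncomputable def P1 : Proc A → Finset A → ℝ
  | nd l, M => if (l.map Prod.fst).toFinset = M then 1 else 0
  | pr l, M => (l.attach.map (fun x => x.1.1 * P1 x.1.2 M)).sum
termination_by p _ => sizeOf p
decreasing_by
  obtain ⟨⟨r, p⟩, hmem⟩ := x
  have h := List.sizeOf_lt_of_mem hmem
  simp at h ⊢
  omega

end Proc
/-- Flattening used when a probabilistic transition would lead to a probabilistic state. -/
def flat {A : Type} (w : ℝ) : Proc A → List (ℝ × Proc A)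
  | Proc.pr l => l.map (fun x => (w * x.1, x.2))
  | q => [(w, q)]

namespace Proc

variable {A : Type} [DecidableEq A]

/-- The derived process s_{(M,a)} : the process that `s` becomes, given that the
menu `M` was offered and the action `a ∈ M` was performed. -/
noncomputable def after : Proc A → Finset A → A → Option (Proc A)
  | nd l, M, a => if (l.map Prod.fst).toFinset = M then step (nd l) a else none
  | pr l, M, a =>
      let sel := l.filter (fun x => x.2.menu = M)
      let tot := (sel.map Prod.fst).sum
      let entries := sel.flatMap (fun x =>
        match x.2.step a with
        | none => []
        | some q => flat (x.1 / tot) q)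
      if entries.isEmpty then none else some (pr entries)

/-- The conditional ready-trace probability
`P_sⁿ(M | M₁,a₁,…,a_{n-1})`, where `none` represents undefinedness. -/
noncomputable def Pn : Proc A → List (Finset A × A) → Finset A → Option ℝ
  | s, [], M => some (P1 s M)
  | s, Ma :: rest, M =>
      if 0 < P1 s Ma.1 then (after s Ma.1 Ma.2).bind (fun s' => Pn s' rest M)
      else none

/-- Probabilistic ready trace equivalence `≈_O`. -/
noncomputable def RTEquiv (s t : Proc A) : Prop :=
  ∀ (tr : List (Finset A × A)) (M : Finset A), Pn s tr M = Pn t tr M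

/-- Well-formed process graphs: action-deterministic menus, probabilities in (0,1]
summing to one, and probabilistic transitions leading to nondeterministic states. -/
inductive WF : Proc A → Prop
  | nd (l : List (A × Proc A)) :
      (l.map Prod.fst).Nodup → (∀ x ∈ l, WF x.2) → WF (.nd l)
  | pr (l : List (ℝ × Proc A)) :
      (∀ x ∈ l, 0 < x.1 ∧ x.1 ≤ 1 ∧ ∃ l', x.2 = Proc.nd l') →
      (l.map Prod.fst).sum = 1 →
      (∀ x ∈ l, WF x.2) → WF (.pr l)

end Proc
/-- The field of rational functions whose argument names are the action labels. -/
abbrev RF (A : Type) := FractionRing (MvPolynomial A ℝ)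

/-- The rational function consisting of the single variable named by action `a`. -/
noncomputable def RVar {A : Type} (a : A) : RF A :=
  algebraMap (MvPolynomial A ℝ) (RF A) (MvPolynomial.X a)

namespace Proc

variable {A : Type} [DecidableEq A]

/-- A state can immediately report success. -/
def hasOmega (ω : A) : Proc A → Prop
  | nd l => ω ∈ l.map Prod.fst
  | pr _ => False

/-- `ResRel ω s T r` : the result of testing process `s` with test `T` is the
rational function `r` (ω is the success action of tests). -/
inductive ResRel (ω : A) : Proc A → Proc A → RF A → Prop
  | success (s : Proc A) (l : List (A × Proc A)) (h : ω ∈ l.map Prod.fst) :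
      ResRel ω s (.nd l) 1
  | probL (l : List (ℝ × Proc A)) (T : Proc A) (r : ℝ × Proc A → RF A)
      (hT : ¬ hasOmega ω T)
      (h : ∀ x ∈ l, ResRel ω x.2 T (r x)) :
      ResRel ω (.pr l) T ((l.map (fun x => algebraMap ℝ (RF A) x.1 * r x)).sum)
  | probR (l : List (A × Proc A)) (l' : List (ℝ × Proc A)) (r : ℝ × Proc A → RF A)
      (h : ∀ x ∈ l', ResRel ω (.nd l) x.2 (r x)) :
      ResRel ω (.nd l) (.pr l') ((l'.map (fun x => algebraMap ℝ (RF A) x.1 * r x)).sum)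
  | sync (l l' : List (A × Proc A)) (r : A → RF A)
      (hω : ω ∉ l'.map Prod.fst)
      (h : ∀ a ∈ (l.map Prod.fst).toFinset ∩ (l'.map Prod.fst).toFinset,
        ∀ sa Ta, Proc.step (.nd l) a = some sa → Proc.step (.nd l') a = some Ta →
          ResRel ω sa Ta (r a)) :
      ResRel ω (.nd l) (.nd l')
        (∑ a ∈ (l.map Prod.fst).toFinset ∩ (l'.map Prod.fst).toFinset,
          (RVar a / ∑ b ∈ (l.map Prod.fst).toFinset ∩ (l'.map Prod.fst).toFinset, RVar b) * r a)

/-- Testing equivalence `≈_T` : equal testing results for every test. -/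
def TestEquiv (ω : A) (s t : Proc A) : Prop :=
  ∀ T : Proc A, WF T → ∀ r : RF A, (ResRel ω s T r ↔ ResRel ω t T r)

/-- Processes (as opposed to tests) never perform the success action ω. -/
inductive NoOmega (ω : A) : Proc A → Prop
  | nd (l : List (A × Proc A)) :
      ω ∉ l.map Prod.fst → (∀ x ∈ l, NoOmega ω x.2) → NoOmega ω (.nd l)
  | pr (l : List (ℝ × Proc A)) :
      (∀ x ∈ l, NoOmega ω x.2) → NoOmega ω (.pr l)

/-- Processes with no probabilistic transitions at all. -/
inductive NoProb : Proc A → Prop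
  | nd (l : List (A × Proc A)) : (∀ x ∈ l, NoProb x.2) → NoProb (.nd l)

end Proc

/-!
`ResRel ω s T` is the graph of a total function `res ω s T`, and against well-formed processes
this function is affine in the probabilistic choices of the test: a probabilistic test gives the
weighted average of the results of its branches, and a nondeterministic test is affine in each of
its branches. Expanding all probabilistic choices therefore turns every well-formed test into a
combination, with weights summing to one, of well-formed tests without probabilistic transitions
that yields the same result on every well-formed process. If `s` and `t` obtain different
results from the combination, they obtain different results from one of its summands.
-/

theorem List.sum_map_sum_map {ι κ M : Type*} [AddCommMonoid M] (l : List ι) (m : List κ)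
    (f : ι → κ → M) :
    (l.map fun i => (m.map (f i)).sum).sum = (m.map fun k => (l.map (f · k)).sum).sum := by
  simpa using Multiset.sum_map_sum_map (l : Multiset ι) (m : Multiset κ) (f := f)

theorem List.sum_map_finset_sum {ι κ M : Type*} [AddCommMonoid M] (l : List ι) (s : Finset κ)
    (f : ι → κ → M) :
    (l.map fun i => ∑ k ∈ s, f i k).sum = ∑ k ∈ s, (l.map (f · k)).sum := by
  induction l with
  | nil => simp
  | cons i l ih => simp [ih, Finset.sum_add_distrib]

theorem List.sum_map_flatMap {ι κ M : Type*} [AddCommMonoid M] (l : List ι) (g : ι → List κ)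
    (f : κ → M) : ((l.flatMap g).map f).sum = (l.map fun i => ((g i).map f).sum).sum := by
  simp [List.flatMap_def, List.sum_flatten, List.map_flatten, Function.comp_def]

theorem List.sum_map_algebraMap_mul_of_sum_eq_one {β R : Type*} [Semiring R] [Algebra ℝ R]
    {l : List (ℝ × β)} (h : (l.map Prod.fst).sum = 1) (c : R) :
    (l.map fun x => algebraMap ℝ R x.1 * c).sum = c := by
  have : (l.map fun x => algebraMap ℝ R x.1) = (l.map Prod.fst).map (algebraMap ℝ R) := by simp
  rw [List.sum_map_mul_right, this, ← map_list_sum, h, map_one, one_mul]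

namespace Proc

variable {A : Type}

lemma sizeOf_lt_sizeOf_nd {l : List (A × Proc A)} {x : A × Proc A} (h : x ∈ l) :
    sizeOf x.2 < sizeOf (nd l) := by
  have := List.sizeOf_lt_of_mem h
  cases x; simp at this ⊢; omega

lemma sizeOf_lt_sizeOf_pr {l : List (ℝ × Proc A)} {x : ℝ × Proc A} (h : x ∈ l) :
    sizeOf x.2 < sizeOf (pr l) := by
  have := List.sizeOf_lt_of_mem h
  cases x; simp at this ⊢; omega

lemma WF.nodup_keys {l : List (A × Proc A)} (h : WF (.nd l)) : (l.map Prod.fst).Nodup := by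
  cases h with | nd _ h _ => exact h

lemma WF.of_mem_nd {l : List (A × Proc A)} (h : WF (.nd l)) {x : A × Proc A} (hx : x ∈ l) :
    WF x.2 := by
  cases h with | nd _ _ h => exact h x hx

lemma WF.of_mem_pr {l : List (ℝ × Proc A)} (h : WF (.pr l)) {x : ℝ × Proc A} (hx : x ∈ l) :
    WF x.2 := by
  cases h with | pr _ _ _ h => exact h x hx

lemma WF.sum_weights {l : List (ℝ × Proc A)} (h : WF (.pr l)) : (l.map Prod.fst).sum = 1 := by
  cases h with | pr _ _ h _ => exact h

lemma WF.exists_nd_of_mem_pr {l : List (ℝ × Proc A)} (h : WF (.pr l)) {x : ℝ × Proc A}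
    (hx : x ∈ l) : ∃ l', x.2 = .nd l' := by
  cases h with | pr _ h _ _ => exact (h x hx).2.2

lemma WF.nd_append_cons {l₁ l₂ : List (A × Proc A)} {a : A} {S S' : Proc A}
    (h : WF (.nd (l₁ ++ (a, S) :: l₂))) (hS' : WF S') : WF (.nd (l₁ ++ (a, S') :: l₂)) := by
  refine .nd _ (by simpa using h.nodup_keys) fun x hx => ?_
  rcases List.mem_append.mp hx with hx | hx
  · exact h.of_mem_nd (List.mem_append_left _ hx)
  rcases List.mem_cons.mp hx with rfl | hx
  · exact hS'
  · exact h.of_mem_nd (by simp [hx])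

variable [DecidableEq A]

lemma mem_of_step_eq_some {l : List (A × Proc A)} {a : A} {q : Proc A}
    (h : step (nd l) a = some q) : (a, q) ∈ l := by
  simp only [step, Option.map_eq_some_iff] at h
  obtain ⟨x, hx, rfl⟩ := h
  obtain rfl : x.1 = a := by simpa using List.find?_some hx
  exact List.mem_of_find?_eq_some hx

lemma exists_step_eq_some {l : List (A × Proc A)} {a : A} (h : a ∈ l.map Prod.fst) :
    ∃ q, step (nd l) a = some q := by
  obtain ⟨x, hx, rfl⟩ := List.mem_map.mp h
  obtain ⟨y, hy⟩ := Option.isSome_iff_exists.mp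
    (List.find?_isSome (p := fun y => decide (y.1 = x.1)) |>.mpr ⟨x, hx, by simp⟩)
  exact ⟨y.2, by simp [step, hy]⟩

theorem exists_resRel (ω : A) (s T : Proc A) : ∃ r, ResRel ω s T r := by
  match T, s with
  | nd l', s =>
    by_cases hω : ω ∈ l'.map Prod.fst
    · exact ⟨1, .success s l' hω⟩
    match s with
    | nd l =>
      have H : ∀ a, ∃ ra, ∀ sa Ta, step (nd l) a = some sa → step (nd l') a = some Ta →
          ResRel ω sa Ta ra := by
        intro a
        match hsa : step (nd l) a, hTa : step (nd l') a with
        | some sa, some Ta =>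
          have := sizeOf_lt_sizeOf_nd (mem_of_step_eq_some hsa)
          have := sizeOf_lt_sizeOf_nd (mem_of_step_eq_some hTa)
          obtain ⟨r, hr⟩ := exists_resRel ω sa Ta
          exact ⟨r, by rintro _ _ ⟨⟩ ⟨⟩; exact hr⟩
        | none, _ => exact ⟨0, by rintro _ _ ⟨⟩⟩
        | some _, none => exact ⟨0, by rintro _ _ _ ⟨⟩⟩
      choose r hr using H
      exact ⟨_, .sync l l' r hω fun a _ => hr a⟩
    | pr l =>
      have H : ∀ x ∈ l, ∃ rx, ResRel ω x.2 (nd l') rx := fun x hx =>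
        have := sizeOf_lt_sizeOf_pr hx
        exists_resRel ω x.2 (nd l')
      choose! r hr using H
      exact ⟨_, .probL l _ r hω hr⟩
  | pr l', nd l =>
    have H : ∀ x ∈ l', ∃ rx, ResRel ω (nd l) x.2 rx := fun x hx =>
      have := sizeOf_lt_sizeOf_pr hx
      exists_resRel ω (nd l) x.2
    choose! r hr using H
    exact ⟨_, .probR l l' r hr⟩
  | pr l', pr l =>
    have H : ∀ x ∈ l, ∃ rx, ResRel ω x.2 (pr l') rx := fun x hx =>
      have := sizeOf_lt_sizeOf_pr hx
      exists_resRel ω x.2 (pr l')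
    choose! r hr using H
    exact ⟨_, .probL l _ r id hr⟩
termination_by sizeOf s + sizeOf T
decreasing_by all_goals simp_all <;> omega

theorem ResRel.unique {ω : A} {s T : Proc A} {r r' : RF A}
    (h : ResRel ω s T r) (h' : ResRel ω s T r') : r = r' := by
  induction h generalizing r' with
  | success s l hω =>
    cases h' with
    | success => rfl
    | probL _ _ _ hT => exact absurd hω hT
    | sync _ _ _ hω' => exact absurd hω hω'
  | probL l T r hT _ ih =>
    cases h' with
    | success _ _ hω => exact absurd hω hT
    | probL _ _ _ _ h' =>
      exact congrArg List.sum (List.map_congr_left fun x hx => by rw [ih x hx (h' x hx)])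
  | probR l l' r _ ih =>
    cases h' with
    | probR _ _ _ h' =>
      exact congrArg List.sum (List.map_congr_left fun x hx => by rw [ih x hx (h' x hx)])
  | sync l l' r hω _ ih =>
    cases h' with
    | success _ _ hω' => exact absurd hω' hω
    | sync _ _ _ _ h' =>
      refine Finset.sum_congr rfl fun a ha => ?_
      obtain ⟨ha₁, ha₂⟩ := Finset.mem_inter.mp ha
      obtain ⟨sa, hsa⟩ := exists_step_eq_some (List.mem_toFinset.mp ha₁)
      obtain ⟨Ta, hTa⟩ := exists_step_eq_some (List.mem_toFinset.mp ha₂)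
      rw [ih a ha sa Ta hsa hTa (h' a ha sa Ta hsa hTa)]

noncomputable def res (ω : A) (s T : Proc A) : RF A :=
  (exists_resRel ω s T).choose

variable {ω : A}

lemma resRel_res (s T : Proc A) : ResRel ω s T (res ω s T) :=
  (exists_resRel ω s T).choose_spec

lemma ResRel.res_eq {s T : Proc A} {r : RF A} (h : ResRel ω s T r) : res ω s T = r :=
  (resRel_res s T).unique h

lemma testEquiv_iff_forall_res_eq {s t : Proc A} :
    TestEquiv ω s t ↔ ∀ T, WF T → res ω s T = res ω t T := by
  have resRel_iff : ∀ {s T r}, ResRel ω s T r ↔ res ω s T = r :=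
    ⟨ResRel.res_eq, fun h => h ▸ resRel_res _ _⟩
  simp only [TestEquiv, resRel_iff]
  exact ⟨fun h T hT => ((h T hT _).mp rfl).symm, fun h T hT r => by rw [h T hT]⟩

lemma res_of_mem {l' : List (A × Proc A)} (hω : ω ∈ l'.map Prod.fst) (s : Proc A) :
    res ω s (nd l') = 1 :=
  (ResRel.success s l' hω).res_eq

lemma res_pr_of_not_hasOmega {T : Proc A} (hT : ¬ hasOmega ω T) (l : List (ℝ × Proc A)) :
    res ω (pr l) T = (l.map fun x => algebraMap ℝ (RF A) x.1 * res ω x.2 T).sum :=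
  (ResRel.probL l T (fun x => res ω x.2 T) hT fun x _ => resRel_res x.2 T).res_eq

lemma res_nd_pr (l : List (A × Proc A)) (l' : List (ℝ × Proc A)) :
    res ω (nd l) (pr l') = (l'.map fun x => algebraMap ℝ (RF A) x.1 * res ω (nd l) x.2).sum :=
  (ResRel.probR l l' (fun x => res ω (nd l) x.2) fun x _ => resRel_res _ x.2).res_eq

noncomputable def resAfter (ω : A) (s T : Proc A) (a : A) : RF A :=
  match s.step a, T.step a with
  | some sa, some Ta => res ω sa Ta
  | _, _ => 0

lemma res_nd_nd {l l' : List (A × Proc A)} (hω : ω ∉ l'.map Prod.fst) :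
    res ω (nd l) (nd l') =
      ∑ a ∈ (l.map Prod.fst).toFinset ∩ (l'.map Prod.fst).toFinset,
        (RVar a / ∑ b ∈ (l.map Prod.fst).toFinset ∩ (l'.map Prod.fst).toFinset, RVar b)
          * resAfter ω (nd l) (nd l') a := by
  refine (ResRel.sync l l' _ hω fun a _ sa Ta hsa hTa => ?_).res_eq
  simpa [resAfter, hsa, hTa] using resRel_res sa Ta

lemma res_pr {l : List (ℝ × Proc A)} (hs : WF (pr l)) (T : Proc A) :
    res ω (pr l) T = (l.map fun x => algebraMap ℝ (RF A) x.1 * res ω x.2 T).sum := by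
  match T with
  | pr _ => exact res_pr_of_not_hasOmega id l
  | nd l' =>
    by_cases hω : ω ∈ l'.map Prod.fst
    · simp only [res_of_mem hω]
      exact (List.sum_map_algebraMap_mul_of_sum_eq_one hs.sum_weights 1).symm
    · exact res_pr_of_not_hasOmega (T := nd l') hω l

variable (ω) in
def IsMixture (T : Proc A) (ms : List (ℝ × Proc A)) : Prop :=
  (ms.map Prod.fst).sum = 1 ∧
    ∀ u, WF u → res ω u T = (ms.map fun x => algebraMap ℝ (RF A) x.1 * res ω u x.2).sum

/-- Well-formed probabilistic processes are averages of their nondeterministic components. -/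
lemma IsMixture.of_nd {T : Proc A} {ms : List (ℝ × Proc A)} (hms : (ms.map Prod.fst).sum = 1)
    (h : ∀ l, WF (nd l) →
      res ω (nd l) T = (ms.map fun x => algebraMap ℝ (RF A) x.1 * res ω (nd l) x.2).sum) :
    IsMixture ω T ms := by
  refine ⟨hms, fun u hu => ?_⟩
  match u with
  | nd l => exact h l hu
  | pr l =>
    have hcomp : ∀ y ∈ l, res ω y.2 T
        = (ms.map fun x => algebraMap ℝ (RF A) x.1 * res ω y.2 x.2).sum := by
      intro y hy
      obtain ⟨l', hl'⟩ := hu.exists_nd_of_mem_pr hy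
      rw [hl']
      exact h l' (hl' ▸ hu.of_mem_pr hy)
    calc res ω (pr l) T
        = (l.map fun y => (ms.map fun x =>
            algebraMap ℝ (RF A) y.1 * (algebraMap ℝ (RF A) x.1 * res ω y.2 x.2)).sum).sum := by
          rw [res_pr hu]
          exact congrArg List.sum <| List.map_congr_left fun y hy => by
            rw [hcomp y hy, List.sum_map_mul_left]
      _ = (ms.map fun x => algebraMap ℝ (RF A) x.1 *
            (l.map fun y => algebraMap ℝ (RF A) y.1 * res ω y.2 x.2).sum).sum := by
          rw [List.sum_map_sum_map]
          exact congrArg List.sum <| List.map_congr_left fun x _ => by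
            rw [← List.sum_map_mul_left]
            exact congrArg List.sum <| List.map_congr_left fun y _ => by ring
      _ = _ := by simp only [res_pr hu]

lemma isMixture_pr {l : List (ℝ × Proc A)} (hT : WF (pr l)) : IsMixture ω (pr l) l :=
  .of_nd hT.sum_weights fun l' _ => res_nd_pr l' l

lemma IsMixture.bind {T : Proc A} {ms : List (ℝ × Proc A)} (hT : IsMixture ω T ms)
    (f : ℝ × Proc A → List (ℝ × Proc A)) (hf : ∀ x ∈ ms, IsMixture ω x.2 (f x)) :
    IsMixture ω T (ms.flatMap fun x => (f x).map fun y => (x.1 * y.1, y.2)) := by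
  refine ⟨?_, fun u hu => ?_⟩
  · rw [List.sum_map_flatMap, ← hT.1]
    refine congrArg List.sum (List.map_congr_left fun x hx => ?_)
    simp [Function.comp_def, List.sum_map_mul_left, (hf x hx).1]
  · rw [hT.2 u hu, List.sum_map_flatMap]
    refine congrArg List.sum (List.map_congr_left fun x hx => ?_)
    simp [Function.comp_def, (hf x hx).2 u hu, ← List.sum_map_mul_left, mul_assoc]

lemma step_append_cons_self {l₁ : List (A × Proc A)} {a : A} (ha : a ∉ l₁.map Prod.fst)
    (S : Proc A) (l₂ : List (A × Proc A)) : step (nd (l₁ ++ (a, S) :: l₂)) a = some S := by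
  have : l₁.find? (fun x => x.1 = a) = none :=
    List.find?_eq_none.mpr fun x hx hxa => ha (List.mem_map.mpr ⟨x, hx, by simpa using hxa⟩)
  simp [step, List.find?_append, this]

lemma step_append_cons_of_ne {a b : A} (hb : b ≠ a) (l₁ : List (A × Proc A)) (S : Proc A)
    (l₂ : List (A × Proc A)) : step (nd (l₁ ++ (a, S) :: l₂)) b = step (nd (l₁ ++ l₂)) b := by
  simp [step, List.find?_append, Ne.symm hb]

lemma resAfter_nd_append_cons {S : Proc A} {ms : List (ℝ × Proc A)} (hS : IsMixture ω S ms)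
    {lu : List (A × Proc A)} (hu : WF (nd lu)) {l₁ : List (A × Proc A)} {a : A}
    (ha : a ∉ l₁.map Prod.fst) (l₂ : List (A × Proc A)) (b : A) :
    resAfter ω (nd lu) (nd (l₁ ++ (a, S) :: l₂)) b = (ms.map fun x =>
      algebraMap ℝ (RF A) x.1 * resAfter ω (nd lu) (nd (l₁ ++ (a, x.2) :: l₂)) b).sum := by
  by_cases hb : b = a
  · subst hb
    simp only [resAfter, step_append_cons_self ha]
    match hub : step (nd lu) b with
    | none => simp
    | some ub => exact hS.2 ub (hu.of_mem_nd (mem_of_step_eq_some hub))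
  · simp only [resAfter, step_append_cons_of_ne hb]
    exact (List.sum_map_algebraMap_mul_of_sum_eq_one hS.1 _).symm

lemma IsMixture.nd_append_cons {S : Proc A} {ms : List (ℝ × Proc A)} (hS : IsMixture ω S ms)
    {l₁ : List (A × Proc A)} {a : A} (ha : a ∉ l₁.map Prod.fst) (l₂ : List (A × Proc A)) :
    IsMixture ω (nd (l₁ ++ (a, S) :: l₂))
      (ms.map fun x => (x.1, nd (l₁ ++ (a, x.2) :: l₂))) := by
  refine .of_nd (by simpa [Function.comp_def] using hS.1) fun lu hu => ?_
  have hkeys : ∀ S' : Proc A,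
      (l₁ ++ (a, S') :: l₂).map Prod.fst = (l₁ ++ (a, S) :: l₂).map Prod.fst := by simp
  simp only [List.map_map, Function.comp_def]
  by_cases hω : ω ∈ (l₁ ++ (a, S) :: l₂).map Prod.fst
  · have hres : ∀ S', res ω (nd lu) (nd (l₁ ++ (a, S') :: l₂)) = 1 :=
      fun S' => res_of_mem (hkeys S' ▸ hω) _
    simp only [hres]
    exact (List.sum_map_algebraMap_mul_of_sum_eq_one hS.1 _).symm
  · set I := (lu.map Prod.fst).toFinset ∩ ((l₁ ++ (a, S) :: l₂).map Prod.fst).toFinset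
    have hres : ∀ S', res ω (nd lu) (nd (l₁ ++ (a, S') :: l₂)) = ∑ b ∈ I,
        (RVar b / ∑ b' ∈ I, RVar b') * resAfter ω (nd lu) (nd (l₁ ++ (a, S') :: l₂)) b :=
      fun S' => by rw [res_nd_nd (hkeys S' ▸ hω), hkeys]
    simp only [hres, Finset.mul_sum, List.sum_map_finset_sum]
    refine Finset.sum_congr rfl fun b _ => ?_
    rw [resAfter_nd_append_cons hS hu ha, ← List.sum_map_mul_left]
    exact congrArg List.sum <| List.map_congr_left fun x _ => by ring

variable (ω) in
def Derandomizable (T : Proc A) : Prop :=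
  ∃ ms, IsMixture ω T ms ∧ ∀ x ∈ ms, WF x.2 ∧ NoProb x.2

lemma derandomizable_of_noProb {T : Proc A} (hT : WF T) (hT' : NoProb T) :
    Derandomizable ω T :=
  ⟨[(1, T)], ⟨by simp, fun u _ => by simp⟩, by simpa using ⟨hT, hT'⟩⟩

lemma IsMixture.derandomizable {T : Proc A} {ms : List (ℝ × Proc A)} (hT : IsMixture ω T ms)
    (h : ∀ x ∈ ms, Derandomizable ω x.2) : Derandomizable ω T := by
  choose! f hf hf' using h
  refine ⟨_, hT.bind f hf, ?_⟩
  simp only [List.mem_flatMap, List.mem_map]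
  rintro _ ⟨x, hx, y, hy, rfl⟩
  exact hf' x hx y hy

-- The branches are derandomized from left to right; `p` holds those already done.
lemma derandomizable_nd_append (l : List (A × Proc A))
    (hl : ∀ x ∈ l, WF x.2 → Derandomizable ω x.2) :
    ∀ p : List (A × Proc A), (∀ x ∈ p, NoProb x.2) → WF (nd (p ++ l)) →
      Derandomizable ω (nd (p ++ l)) := by
  induction l with
  | nil =>
    intro p hp hwf
    rw [List.append_nil] at hwf ⊢
    exact derandomizable_of_noProb hwf (.nd p hp)
  | cons x l ih =>
    obtain ⟨a, S⟩ := x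
    intro p hp hwf
    have ha : a ∉ p.map Prod.fst := by
      have := hwf.nodup_keys
      simp only [List.map_append, List.map_cons, List.nodup_append] at this
      exact fun h => this.2.2 _ h _ List.mem_cons_self rfl
    obtain ⟨ms, hS, hms⟩ := hl (a, S) List.mem_cons_self (hwf.of_mem_nd (by simp))
    refine (hS.nd_append_cons ha l).derandomizable ?_
    simp only [List.forall_mem_map]
    intro x hx
    simpa using ih (fun y hy => hl y (List.mem_cons_of_mem _ hy)) (p ++ [(a, x.2)])
      (List.forall_mem_append.mpr ⟨hp, by simpa using (hms x hx).2⟩)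
      (by simpa using hwf.nd_append_cons (hms x hx).1)

theorem WF.derandomizable : ∀ {T : Proc A}, WF T → Derandomizable ω T
  | Proc.nd l, hT => by
    simpa using derandomizable_nd_append l (fun x hx hx' => hx'.derandomizable) []
      (by simp) (by simpa using hT)
  | Proc.pr l, hT =>
    (isMixture_pr hT).derandomizable fun x hx => (hT.of_mem_pr hx).derandomizable
termination_by T => sizeOf T
decreasing_by
  · exact sizeOf_lt_sizeOf_nd hx
  · exact sizeOf_lt_sizeOf_pr hx

lemma IsMixture.exists_res_ne {T : Proc A} {ms : List (ℝ × Proc A)} (hT : IsMixture ω T ms)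
    {s t : Proc A} (hs : WF s) (ht : WF t) (hne : res ω s T ≠ res ω t T) :
    ∃ x ∈ ms, res ω s x.2 ≠ res ω t x.2 := by
  by_contra! h
  refine hne ?_
  rw [hT.2 s hs, hT.2 t ht]
  exact congrArg List.sum (List.map_congr_left fun x hx => by rw [h x hx])

end Proc

theorem not_testEquiv_iff_nonprob_distinguishing_test_general
    {A : Type} [DecidableEq A] (ω : A)
    (s t : Proc A) (hs : Proc.WF s) (ht : Proc.WF t) :
    ¬ Proc.TestEquiv ω s t ↔
      ∃ T : Proc A, Proc.WF T ∧ Proc.NoProb T ∧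
        ∃ r r' : RF A, Proc.ResRel ω s T r ∧ Proc.ResRel ω t T r' ∧ r ≠ r' := by
  rw [Proc.testEquiv_iff_forall_res_eq]
  push Not
  constructor
  · rintro ⟨T, hT, hne⟩
    obtain ⟨ms, hmix, hms⟩ := hT.derandomizable (ω := ω)
    obtain ⟨x, hx, hne⟩ := hmix.exists_res_ne hs ht hne
    exact ⟨x.2, (hms x hx).1, (hms x hx).2, _, _, Proc.resRel_res _ _, Proc.resRel_res _ _,
      hne⟩
  · rintro ⟨T, hT, -, r, r', hr, hr', hne⟩
    exact ⟨T, hT, by rwa [hr.res_eq, hr'.res_eq]⟩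

/-- Two processes are not testing equivalent if and only if there exists a test
with no probabilistic transitions whose results on the two processes differ;
i.e. probabilistic transitions add no distinguishing power to tests. -/
theorem not_testEquiv_iff_nonprob_distinguishing_test
    {A : Type} [DecidableEq A] (ω : A)
    (s t : Proc A) (hs : Proc.WF s) (ht : Proc.WF t)
    (hsω : Proc.NoOmega ω s) (htω : Proc.NoOmega ω t) :
    ¬ Proc.TestEquiv ω s t ↔
      ∃ T : Proc A, Proc.WF T ∧ Proc.NoProb T ∧
        ∃ r r' : RF A, Proc.ResRel ω s T r ∧ Proc.ResRel ω t T r' ∧ r ≠ r' :=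
  not_testEquiv_iff_nonprob_distinguishing_test_general ω s t hs ht
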